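/- arXiv:1510.06998 — 2 statements merged into one kernel-verified Lean document; each statement's English description precedes it below -/
import Mathlib

section
/- Suppose 𝔤 = 𝔞 ⊕ 𝔫 is an internal direct sum of subspaces, where 𝔞 and 𝔫 are Lie subalgebras of 𝔤. Let θ_𝔞 : U(𝔞) → U(𝔤) be the algebra homomorphism induced by the inclusion 𝔞 ↪ 𝔤. Then the composite ℂ-linear map U(𝔞) → M_η sending u to [θ_𝔞(u)] is a linear isomorphism; in particular M_η is a free module of rank one over the image of U(𝔞). -/
open UniversalEnvelopingAlgebra

attribute [local instance 100] LieRing.ofAssociativeRing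

/-- The left ideal of `U(L)` generated by `{ι x - η x • 1 : x ∈ N}`. -/
noncomputable def whittakerIdeal (L : Type*) [LieRing L] [LieAlgebra ℂ L]
    (N : LieSubalgebra ℂ L) (η : N →ₗ⁅ℂ⁆ ℂ) :
    Submodule (UniversalEnvelopingAlgebra ℂ L) (UniversalEnvelopingAlgebra ℂ L) :=
  Submodule.span (UniversalEnvelopingAlgebra ℂ L)
    {a | ∃ x : N, a = ι ℂ (x : L) - algebraMap ℂ (UniversalEnvelopingAlgebra ℂ L) (η x)}

/-!
Surjectivity: the image of `U(𝔞)` in `M_η` contains `[1]` and is stable under every `ι x`,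
because `ι x` can be moved past `θ_𝔞(w)` at the cost of `ι ⁅x, a⁆` terms, and on `[1]` an
element `a + n` of `𝔞 ⊕ 𝔫` acts as `ι a + η n`.

Injectivity: `U(𝔞)` carries a `𝔤`-action in which `𝔞` acts by left multiplication and `1` is a
Whittaker vector, so `u ↦ u • 1` factors through `M_η` and inverts `u ↦ [θ_𝔞(u)]`. Without PBW
this action is obtained from the `𝔞`-module `Hom(𝔤, U(𝔞))`, `(a • f) x = ι a * f x + f ⁅x, a⁆`:
acting with `w ∈ U(𝔞)` on the map `χ` that is `ι` on `𝔞` and `η` on `𝔫` gives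
`x • w := (w • χ) x`, which satisfies `x • (ι a * w) = ι a * (x • w) + ⁅x, a⁆ • w`; induction on
`w` then shows that it is a Lie algebra action.
-/

local notation "𝓤" => UniversalEnvelopingAlgebra

namespace UniversalEnvelopingAlgebra

variable {R L : Type*} [CommRing R] [LieRing L] [LieAlgebra R L]

theorem adjoin_range_ι : Algebra.adjoin R (Set.range (ι R (L := L))) = ⊤ := by
  have hmk : (mkAlgHom R L).range = ⊤ := (AlgHom.range_eq_top _).mpr (RingCon.mkₐ_surjective _)
  rw [← hmk, ← Algebra.map_top, ← TensorAlgebra.adjoin_range_ι, AlgHom.map_adjoin,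
    ← Set.range_comp]
  rfl

theorem smul_mem_of_forall_ι_smul_mem {M : Type*} [AddCommGroup M] [Module R M]
    [Module (𝓤 R L) M] [IsScalarTower R (𝓤 R L) M]
    (V : Submodule R M) (hV : ∀ x : L, ∀ m ∈ V, ι R x • m ∈ V)
    (u : 𝓤 R L) {m : M} (hm : m ∈ V) : u • m ∈ V := by
  have hu : u ∈ Algebra.adjoin R (Set.range (ι R)) :=
    (adjoin_range_ι (R := R) (L := L)).symm ▸ trivial
  induction hu using Algebra.adjoin_induction generalizing m with
  | mem _ hx => obtain ⟨x, rfl⟩ := hx; exact hV x m hm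
  | algebraMap r => rw [algebraMap_smul]; exact V.smul_mem r hm
  | add u v _ _ hu hv => rw [add_smul]; exact V.add_mem (hu hm) (hv hm)
  | mul u v _ _ hu hv => rw [mul_smul]; exact hu (hv hm)

@[elab_as_elim]
theorem induction_on_ι_mul {P : 𝓤 R L → Prop} (one : P 1)
    (ι_mul : ∀ (x : L) w, P w → P (ι R x * w)) (add : ∀ v w, P v → P w → P (v + w))
    (smul : ∀ (r : R) w, P w → P (r • w)) (u : 𝓤 R L) : P u := by
  let V : Submodule R (𝓤 R L) :=
    { carrier := {w | P w}
      add_mem' := add _ _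
      zero_mem' := zero_smul R (1 : 𝓤 R L) ▸ smul 0 1 one
      smul_mem' := smul }
  have := smul_mem_of_forall_ι_smul_mem V (fun x w => ι_mul x w) u (m := 1) one
  rwa [smul_eq_mul, mul_one] at this

variable {L' : Type*} [LieRing L'] [LieAlgebra R L']

noncomputable def map (f : L →ₗ⁅R⁆ L') : 𝓤 R L →ₐ[R] 𝓤 R L' :=
  lift R ((ι R).comp f)

@[simp] theorem map_ι (f : L →ₗ⁅R⁆ L') (x : L) : map f (ι R x) = ι R (f x) :=
  lift_ι_apply R _ x

end UniversalEnvelopingAlgebra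

namespace Whittaker

variable {R L : Type*} [CommRing R] [LieRing L] [LieAlgebra R L]

section HomModule

variable (A : LieSubalgebra R L)

noncomputable def homAction (a : A) : Module.End R (L →ₗ[R] 𝓤 R A) where
  toFun f :=
    { toFun x := ι R a * f x + f ⁅x, (a : L)⁆
      map_add' x y := by simp only [map_add, add_lie, mul_add]; abel
      map_smul' r x := by simp [smul_lie] }
  map_add' f g := by
    ext x
    simp only [LinearMap.coe_mk, AddHom.coe_mk, LinearMap.add_apply, mul_add]
    abel
  map_smul' r f := by ext x; simp

@[simp] theorem homAction_apply (a : A) (f : L →ₗ[R] 𝓤 R A) (x : L) :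
    homAction A a f x = ι R a * f x + f ⁅x, (a : L)⁆ := rfl

noncomputable def homRep : A →ₗ⁅R⁆ Module.End R (L →ₗ[R] 𝓤 R A) where
  toFun := homAction A
  map_add' a b := by
    ext f x
    simp only [homAction_apply, LinearMap.add_apply, map_add, add_mul, AddMemClass.coe_add,
      lie_add]
    abel
  map_smul' r a := by ext f x; simp
  map_lie' {a b} := by
    ext f x
    simp only [homAction_apply, Ring.lie_def, LinearMap.sub_apply, Module.End.mul_apply,
      LieSubalgebra.coe_bracket, LieHom.map_lie]
    rw [leibniz_lie, ← lie_skew ⁅x, (b : L)⁆ (a : L), map_add, map_neg]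
    noncomm_ring

end HomModule

section Action

variable {A N : LieSubalgebra R L} (hAN : IsCompl A.toSubmodule N.toSubmodule) (η : N →ₗ⁅R⁆ R)

noncomputable def actionOnOne : L →ₗ[R] 𝓤 R A :=
  (ι R : A →ₗ⁅R⁆ 𝓤 R A).toLinearMap ∘ₗ A.toSubmodule.projectionOnto N.toSubmodule hAN
    + Algebra.linearMap R (𝓤 R A) ∘ₗ η.toLinearMap ∘ₗ
      N.toSubmodule.projectionOnto A.toSubmodule hAN.symm

@[simp] theorem actionOnOne_coe_left (a : A) : actionOnOne hAN η a = ι R a := by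
  simp [actionOnOne, Submodule.projectionOnto_apply_left hAN a,
    Submodule.projectionOnto_apply_of_mem_right hAN.symm a.2]

@[simp] theorem actionOnOne_coe_right (n : N) : actionOnOne hAN η n = η n • 1 := by
  simp [actionOnOne, Submodule.projectionOnto_apply_left hAN.symm n,
    Submodule.projectionOnto_apply_of_mem_right hAN n.2, Algebra.algebraMap_eq_smul_one]

noncomputable def action : L →ₗ[R] Module.End R (𝓤 R A) :=
  (LinearMap.applyₗ (actionOnOne hAN η) ∘ₗ (lift R (homRep A)).toLinearMap).flip

theorem action_apply (x : L) (w : 𝓤 R A) :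
    action hAN η x w = lift R (homRep A) w (actionOnOne hAN η) x :=
  rfl

@[simp] theorem action_one (x : L) : action hAN η x 1 = actionOnOne hAN η x := by
  simp [action_apply]

theorem action_ι_mul (x : L) (a : A) (w : 𝓤 R A) :
    action hAN η x (ι R a * w) = ι R a * action hAN η x w + action hAN η ⁅x, (a : L)⁆ w := by
  simp only [action_apply, map_mul, Module.End.mul_apply, lift_ι_apply]
  rfl

theorem action_ι (x : L) (a : A) :
    action hAN η x (ι R a) = ι R a * actionOnOne hAN η x + actionOnOne hAN η ⁅x, (a : L)⁆ := by
  simpa using action_ι_mul hAN η x a 1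

theorem action_coe_left (a : A) : action hAN η a = LinearMap.mulLeft R (ι R a) := by
  ext w
  induction w using induction_on_ι_mul generalizing a with
  | one => simp
  | ι_mul b w ih =>
    rw [action_ι_mul, ih, ← LieSubalgebra.coe_bracket, ih]
    simp only [LinearMap.mulLeft_apply, LieHom.map_lie, Ring.lie_def]
    noncomm_ring
  | add v w hv hw => simp only [map_add, hv, hw]
  | smul r w ih => simp only [map_smul, ih]

theorem action_one_lie (x y : L) :
    action hAN η ⁅x, y⁆ 1 =
      action hAN η x (action hAN η y 1) - action hAN η y (action hAN η x 1) := by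
  obtain ⟨a, n, ha, hn, rfl⟩ := Submodule.codisjoint_iff_exists_add_eq.mp hAN.codisjoint x
  obtain ⟨b, m, hb, hm, rfl⟩ := Submodule.codisjoint_iff_exists_add_eq.mp hAN.codisjoint y
  lift a to A using ha
  lift b to A using hb
  lift n to N using hn
  lift m to N using hm
  simp only [action_one, map_add, actionOnOne_coe_right, action_ι, LinearMap.add_apply, map_smul,
    action_coe_left, LinearMap.mulLeft_apply, mul_one, add_lie, lie_add]
  rw [← LieSubalgebra.coe_bracket _ a b, ← LieSubalgebra.coe_bracket _ n m,
    ← lie_skew (m : L) (a : L)]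
  simp only [map_neg, actionOnOne_coe_left, actionOnOne_coe_right, LieHom.map_lie, Ring.lie_def,
    mul_comm (η m) (η n), sub_self, zero_smul, mul_smul_comm, mul_one, smul_add, smul_smul]
  abel

theorem action_lie (x y : L) : action hAN η ⁅x, y⁆ = ⁅action hAN η x, action hAN η y⁆ := by
  rw [Ring.lie_def]
  ext w
  simp only [LinearMap.sub_apply, Module.End.mul_apply]
  induction w using induction_on_ι_mul generalizing x y with
  | one => exact action_one_lie hAN η x y
  | ι_mul a w ih =>
    have jacobi : ⁅⁅x, y⁆, (a : L)⁆ = ⁅⁅x, (a : L)⁆, y⁆ + ⁅x, ⁅y, (a : L)⁆⁆ := by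
      rw [lie_lie, ← lie_skew ⁅x, (a : L)⁆ y]; abel
    rw [action_ι_mul, jacobi, map_add, LinearMap.add_apply, ih x y, ih ⁅x, (a : L)⁆ y,
      ih x ⁅y, (a : L)⁆]
    simp only [action_ι_mul, map_add, mul_sub]
    abel
  | add v w hv hw => simp only [map_add, hv, hw]; abel
  | smul r w ih => simp only [map_smul, ih, smul_sub]

noncomputable def rep : L →ₗ⁅R⁆ Module.End R (𝓤 R A) :=
  { action hAN η with map_lie' := action_lie hAN η _ _ }

@[simp] theorem rep_apply (x : L) : rep hAN η x = action hAN η x :=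
  rfl

theorem lift_rep_map_incl (u : 𝓤 R A) :
    lift R (rep hAN η) (map A.incl u) = LinearMap.mulLeft R u := by
  suffices (lift R (rep hAN η)).comp (map A.incl) = Algebra.lmul R (𝓤 R A) from
    AlgHom.congr_fun this u
  apply hom_ext
  ext a w
  show lift R (rep hAN η) (map A.incl (ι R a)) w = ι R a * w
  rw [map_ι, lift_ι_apply, rep_apply, LieSubalgebra.coe_incl, action_coe_left]
  rfl

end Action

section Quotient

variable {L : Type*} [LieRing L] [LieAlgebra ℂ L] {A N : LieSubalgebra ℂ L} (η : N →ₗ⁅ℂ⁆ ℂ)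

theorem lift_rep_apply_one_eq_zero (hAN : IsCompl A.toSubmodule N.toSubmodule) {v : 𝓤 ℂ L}
    (hv : v ∈ whittakerIdeal L N η) : lift ℂ (rep hAN η) v 1 = 0 := by
  induction hv using Submodule.span_induction with
  | mem v hv =>
    obtain ⟨n, rfl⟩ := hv
    simp [Algebra.algebraMap_eq_smul_one]
  | zero => simp
  | add v w _ _ hv hw => simp [hv, hw]
  | smul u v _ hv => simp [hv]

variable (A) in
noncomputable def toWhittaker : 𝓤 ℂ A →ₗ[ℂ] 𝓤 ℂ L ⧸ whittakerIdeal L N η :=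
  (whittakerIdeal L N η).mkQ.restrictScalars ℂ ∘ₗ (map A.incl).toLinearMap

theorem toWhittaker_apply (u : 𝓤 ℂ A) :
    toWhittaker A η u = Submodule.Quotient.mk (map A.incl u) :=
  rfl

theorem toWhittaker_injective (hAN : IsCompl A.toSubmodule N.toSubmodule) :
    Function.Injective (toWhittaker A η) := by
  intro u v huv
  have h := lift_rep_apply_one_eq_zero η hAN ((Submodule.Quotient.eq _).mp huv)
  rwa [map_sub, LinearMap.sub_apply, AlgHom.toLinearMap_apply, AlgHom.toLinearMap_apply,
    lift_rep_map_incl, lift_rep_map_incl,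
    LinearMap.mulLeft_apply, LinearMap.mulLeft_apply, mul_one, mul_one, sub_eq_zero] at h

theorem mk_ι_coe_right (n : N) :
    (Submodule.Quotient.mk (ι ℂ (n : L)) : 𝓤 ℂ L ⧸ whittakerIdeal L N η) =
      η n • Submodule.Quotient.mk 1 := by
  rw [← Submodule.Quotient.mk_smul, Submodule.Quotient.eq]
  exact Submodule.subset_span ⟨n, by rw [Algebra.algebraMap_eq_smul_one]⟩

theorem ι_coe_left_smul_toWhittaker (a : A) (w : 𝓤 ℂ A) :
    ι ℂ (a : L) • toWhittaker A η w = toWhittaker A η (ι ℂ a * w) := by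
  rw [toWhittaker_apply, toWhittaker_apply, map_mul, map_ι, ← smul_eq_mul,
    Submodule.Quotient.mk_smul]
  rfl

theorem ι_smul_toWhittaker_mem_range (hAN : Codisjoint A.toSubmodule N.toSubmodule) (x : L)
    (w : 𝓤 ℂ A) : ι ℂ x • toWhittaker A η w ∈ LinearMap.range (toWhittaker A η) := by
  induction w using induction_on_ι_mul generalizing x with
  | one =>
    obtain ⟨a, n, ha, hn, rfl⟩ := Submodule.codisjoint_iff_exists_add_eq.mp hAN x
    lift a to A using ha
    lift n to N using hn
    refine ⟨ι ℂ a + η n • 1, ?_⟩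
    simp only [toWhittaker_apply]
    rw [map_one, ← Submodule.Quotient.mk_smul, smul_eq_mul, mul_one, map_add (ι ℂ),
      Submodule.Quotient.mk_add, mk_ι_coe_right]
    simp [-ι_apply]
  | ι_mul a w ih =>
    obtain ⟨v, hv⟩ := ih x
    have hcomm : ι ℂ x * ι ℂ (a : L) = ι ℂ (a : L) * ι ℂ x + ι ℂ ⁅x, (a : L)⁆ := by
      rw [LieHom.map_lie, Ring.lie_def]; abel
    rw [← ι_coe_left_smul_toWhittaker, ← mul_smul, hcomm, add_smul, mul_smul, ← hv,
      ι_coe_left_smul_toWhittaker]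
    exact add_mem (LinearMap.mem_range_self _ _) (ih _)
  | add v w hv hw => simpa only [map_add, smul_add] using add_mem (hv x) (hw x)
  | smul r w ih =>
    simpa only [map_smul, smul_comm (ι ℂ x) r] using Submodule.smul_mem _ r (ih x)

theorem toWhittaker_surjective (hAN : Codisjoint A.toSubmodule N.toSubmodule) :
    Function.Surjective (toWhittaker A η) := by
  intro q
  obtain ⟨u, rfl⟩ := Submodule.Quotient.mk_surjective _ q
  have hu := smul_mem_of_forall_ι_smul_mem (LinearMap.range (toWhittaker A η))
    (by rintro x _ ⟨w, rfl⟩; exact ι_smul_toWhittaker_mem_range η hAN x w) u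
    (LinearMap.mem_range_self _ 1)
  rwa [toWhittaker_apply, map_one, ← Submodule.Quotient.mk_smul, smul_eq_mul, mul_one] at hu

end Quotient

end Whittaker

open Whittaker in
/-- If `𝔤 = 𝔞 ⊕ 𝔫` is an internal direct sum of subspaces with `𝔞, 𝔫` Lie subalgebras,
then the composite `ℂ`-linear map `U(𝔞) → M_η`, `u ↦ [θ_𝔞(u)]`, is a linear isomorphism
(in particular bijective), where `θ_𝔞 : U(𝔞) → U(𝔤)` is induced by the inclusion. -/
theorem stmt_3 (L : Type*) [LieRing L] [LieAlgebra ℂ L]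
    (A N : LieSubalgebra ℂ L) (η : N →ₗ⁅ℂ⁆ ℂ)
    (hcompl : IsCompl A.toSubmodule N.toSubmodule)
    (θA : UniversalEnvelopingAlgebra ℂ A →ₐ[ℂ] UniversalEnvelopingAlgebra ℂ L)
    (hθA : θA = UniversalEnvelopingAlgebra.lift ℂ ((ι ℂ).comp A.incl)) :
    Function.Bijective (fun u : UniversalEnvelopingAlgebra ℂ A =>
      (Submodule.Quotient.mk (θA u) :
        UniversalEnvelopingAlgebra ℂ L ⧸ whittakerIdeal L N η)) := by
  subst hθA
  exact ⟨toWhittaker_injective η hcompl, toWhittaker_surjective η hcompl.codisjoint⟩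
end

section
/- Let M_0 be the standard Whittaker module associated to the zero homomorphism 0 : 𝔫⁺ → ℂ, i.e., the quotient of U(𝔤) by the left ideal generated by {ι(x) : x ∈ 𝔫⁺}. Then for every nonconstant polynomial p ∈ ℂ[X], the cyclic submodule U(𝔤)·[p(ι(d))] is a nonzero proper submodule of M_0. In particular, M_0 is not a simple U(𝔤)-module. -/
/-
Let `𝔟 = ℂd ⊕ 𝔫⁺`, a complement of `𝔫⁻`. Because `[𝔟, 𝔟] ⊆ 𝔫⁺`, the map `d ↦ X`, `𝔫⁺ ↦ 0` is a
`ℂ[X]`-valued character of `𝔟`; inducing it to `𝔤` gives the universal Verma module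
`ℂ[X] ⊗ U(𝔫⁻)`, on which `U(𝔤)` acts `ℂ[X]`-linearly. Its vector `v = 1 ⊗ 1` is killed by `𝔫⁺`
and satisfies `p(d) v = p v`, and `q ⊗ u ↦ q ε(u)` is a `ℂ[X]`-linear functional with value `1`
at `v`. So `u ↦ u v` factors through `M_0`, sends `[p(d)]` to `p v ≠ 0`, and `[1] = u [p(d)]`
would give `1 = p · ε(u v)`, impossible for nonconstant `p`.

No PBW basis is needed to build the module: `x ↦ x · (1 ⊗ u)` is obtained by letting `U(𝔫⁻)`
act, through its universal property, on `Hom(𝔤, ℂ[X] ⊗ U(𝔫⁻))` by the recursion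
`x (y u) = y (x u) + ⁅x, y⁆ u`, starting from `x · 1 = π⁻ x + χ(x) X` (`π⁻` projects onto
`𝔫⁻` along `𝔟`, `χ` is the `d`-coordinate); that this is a representation of `𝔤` is then checked
by induction on `u`.
-/

open UniversalEnvelopingAlgebra Polynomial

/-- The standard Whittaker module `M_0` for the zero homomorphism: the quotient of `U(𝔤)`
by the left ideal generated by `{ι x : x ∈ 𝔫⁺}`. -/
noncomputable def zeroWhittakerIdeal (L : Type*) [LieRing L] [LieAlgebra ℂ L]
    (Np : LieSubalgebra ℂ L) :
    Submodule (UniversalEnvelopingAlgebra ℂ L) (UniversalEnvelopingAlgebra ℂ L) :=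
  Submodule.span (UniversalEnvelopingAlgebra ℂ L) {a | ∃ x : Np, a = ι ℂ (x : L)}

open scoped TensorProduct

namespace UniversalEnvelopingAlgebra

variable {R L : Type*} [CommRing R] [LieRing L] [LieAlgebra R L]

theorem induction_ι_mul {P : UniversalEnvelopingAlgebra R L → Prop} (one : P 1)
    (add : ∀ u v, P u → P v → P (u + v)) (smul : ∀ (r : R) u, P u → P (r • u))
    (ι_mul : ∀ x u, P u → P (ι R x * u)) (u : UniversalEnvelopingAlgebra R L) : P u := by
  suffices h : ∀ t : TensorAlgebra R L, ∀ u, P u → P (mkAlgHom R L t * u) by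
    obtain ⟨t, rfl⟩ := RingCon.mkₐ_surjective (α := R) (ringCon R L) u
    have h := h t 1 one
    rwa [mul_one] at h
  intro t
  induction t using TensorAlgebra.induction with
  | algebraMap r => intro u hu; simpa [Algebra.smul_def] using smul r u hu
  | ι x => exact ι_mul x
  | mul a b ha hb => intro u hu; rw [map_mul, mul_assoc]; exact ha _ (hb u hu)
  | add a b ha hb => intro u hu; rw [map_add, add_mul]; exact add _ _ (ha u hu) (hb u hu)

end UniversalEnvelopingAlgebra

namespace VermaModule

attribute [local instance] LieRing.ofAssociativeRing

variable {R L : Type*} [CommRing R] [LieRing L] [LieAlgebra R L] (𝔫 : LieSubalgebra R L)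

local notation "V" => R[X] ⊗[R] UniversalEnvelopingAlgebra R 𝔫

/- Without this shortcut, instance search fails to find `Ring (Module.End R (L →ₗ[R] V))`: it
cannot unify the tensor product `V` with the pattern of `TensorProduct.addCommGroup`. -/
noncomputable local instance : AddCommGroup V := TensorProduct.addCommGroup

noncomputable def embed : 𝔫 →ₗ[R] V :=
  Algebra.TensorProduct.includeRight.toLinearMap ∘ₗ (ι R : 𝔫 →ₗ⁅R⁆ _).toLinearMap

lemma embed_apply (y : 𝔫) : embed 𝔫 y = 1 ⊗ₜ ι R y := rfl

lemma embed_lie (y z : 𝔫) : embed 𝔫 ⁅y, z⁆ = embed 𝔫 y * embed 𝔫 z - embed 𝔫 z * embed 𝔫 y := by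
  simp only [embed_apply, LieHom.map_lie, Ring.lie_def, Algebra.TensorProduct.tmul_mul_tmul,
    mul_one, TensorProduct.tmul_sub]

/-- `(y • f) x = y * f x + f ⁅x, y⁆`. -/
noncomputable def homAction : 𝔫 →ₗ⁅R⁆ Module.End R (L →ₗ[R] V) where
  toFun y := LinearMap.llcomp R L V V (LinearMap.mulLeft R (embed 𝔫 y))
    - LinearMap.lcomp R V (LieAlgebra.ad R L y)
  map_add' y z := by
    ext f x
    simp only [map_add, AddMemClass.coe_add, LinearMap.sub_apply, LinearMap.llcomp_apply,
      LinearMap.mulLeft_apply, add_mul, LinearMap.lcomp_apply, LinearMap.add_apply,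
      LieAlgebra.ad_apply]
    abel
  map_smul' r y := by ext f x; simp [smul_sub, smul_mul_assoc]
  map_lie' {y z} := by
    ext f x
    simp only [embed_lie, LieSubalgebra.coe_bracket, LieHom.map_lie, Ring.lie_def,
      LinearMap.sub_apply, LinearMap.llcomp_apply, LinearMap.mulLeft_apply, sub_mul, mul_assoc,
      LinearMap.lcomp_apply, Module.End.mul_apply, LieAlgebra.ad_apply, map_sub]
    abel

variable {𝔫} (π : L →ₗ[R] 𝔫) (χ : L →ₗ[R] R)

noncomputable def actOne : L →ₗ[R] V := embed 𝔫 ∘ₗ π + χ.smulRight (algebraMap R[X] V X)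

noncomputable def action : L →ₗ[R] Module.End R[X] V :=
  ((LinearMap.liftBaseChangeEquiv R[X]).toLinearMap.restrictScalars R) ∘ₗ
    (LinearMap.applyₗ (actOne π χ) ∘ₗ (lift R (homAction 𝔫)).toLinearMap).flip

lemma action_tmul (x : L) (q : R[X]) (u : UniversalEnvelopingAlgebra R 𝔫) :
    action π χ x (q ⊗ₜ u) = q • lift R (homAction 𝔫) u (actOne π χ) x := rfl

lemma action_one (x : L) : action π χ x 1 = actOne π χ x := by
  rw [Algebra.TensorProduct.one_def, action_tmul, one_smul, map_one, Module.End.one_apply]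

lemma action_embed_mul (x : L) (y : 𝔫) (b : V) :
    action π χ x (embed 𝔫 y * b) = embed 𝔫 y * action π χ x b + action π χ ⁅x, y⁆ b := by
  induction b using TensorProduct.induction_on with
  | zero => simp
  | tmul q u =>
    rw [embed_apply, Algebra.TensorProduct.tmul_mul_tmul, one_mul, action_tmul, action_tmul,
      action_tmul, map_mul, Module.End.mul_apply, lift_ι_apply, ← embed_apply, ← lie_skew,
      map_neg, smul_neg, mul_smul_comm]
    simp [homAction, sub_eq_add_neg]
  | add b c hb hc => simp only [mul_add, map_add, hb, hc]; abel

lemma action_algebraMap_mul (x : L) (q : R[X]) (b : V) :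
    action π χ x (algebraMap R[X] V q * b) = algebraMap R[X] V q * action π χ x b := by
  rw [← Algebra.smul_def, ← Algebra.smul_def, LinearMap.map_smul]

lemma action_actOne (x z : L) :
    action π χ x (actOne π χ z) = embed 𝔫 (π z) * actOne π χ x + actOne π χ ⁅x, π z⁆
      + χ z • (algebraMap R[X] V X * actOne π χ x) := by
  have hz : actOne π χ z = embed 𝔫 (π z) * 1 + χ z • (algebraMap R[X] V X * 1) := by
    simp [actOne]
  rw [hz, map_add, LinearMap.map_smul_of_tower, action_embed_mul, action_algebraMap_mul,
    action_one, action_one]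

variable {π χ}

lemma actOne_coe (hπ : ∀ y : 𝔫, π y = y) (hχ : ∀ y : 𝔫, χ y = 0) (y : 𝔫) :
    actOne π χ y = embed 𝔫 y := by
  simp [actOne, hπ, hχ]

lemma actOne_eq_zero {z : L} (hπz : π z = 0) (hχz : χ z = 0) : actOne π χ z = 0 := by
  simp [actOne, hπz, hχz]

lemma action_lie_apply_one (hπ : ∀ y : 𝔫, π y = y) (hχ : ∀ y : 𝔫, χ y = 0)
    (hker : ∀ x y, π x = 0 → π y = 0 → π ⁅x, y⁆ = 0 ∧ χ ⁅x, y⁆ = 0) (x x' : L) :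
    action π χ ⁅x, x'⁆ 1 = action π χ x (action π χ x' 1) - action π χ x' (action π χ x 1) := by
  have hsplit : ⁅x, x'⁆ = ⁅x, (π x' : L)⁆ - ⁅x', (π x : L)⁆ - ((⁅π x, π x'⁆ : 𝔫) : L)
      + ⁅x - π x, x' - π x'⁆ := by
    rw [LieSubalgebra.coe_bracket, sub_lie, lie_sub, lie_sub, ← lie_skew x' (π x : L)]
    abel
  have hker' := hker (x - π x) (x' - π x') (by simp [hπ]) (by simp [hπ])
  have hone (z : L) : actOne π χ z = embed 𝔫 (π z) + χ z • algebraMap R[X] V X := rfl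
  have hcomm (y : 𝔫) : embed 𝔫 y * algebraMap R[X] V X = algebraMap R[X] V X * embed 𝔫 y :=
    (Algebra.commutes _ _).symm
  rw [action_one, action_one, action_one, action_actOne, action_actOne, hsplit, map_add, map_sub,
    map_sub, actOne_eq_zero hker'.1 hker'.2, actOne_coe hπ hχ, embed_lie, hone x, hone x']
  simp only [mul_add, mul_smul_comm, hcomm]
  module

lemma action_lie (hπ : ∀ y : 𝔫, π y = y) (hχ : ∀ y : 𝔫, χ y = 0)
    (hker : ∀ x y, π x = 0 → π y = 0 → π ⁅x, y⁆ = 0 ∧ χ ⁅x, y⁆ = 0) (x x' : L) :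
    action π χ ⁅x, x'⁆ = action π χ x * action π χ x' - action π χ x' * action π χ x := by
  suffices h : ∀ u x x', action π χ ⁅x, x'⁆ (1 ⊗ₜ u)
      = action π χ x (action π χ x' (1 ⊗ₜ u)) - action π χ x' (action π χ x (1 ⊗ₜ u)) by
    ext u
    exact h u x x'
  intro u
  induction u using induction_ι_mul with
  | one => exact action_lie_apply_one hπ hχ hker
  | add u v hu hv => intro x x'; simp only [TensorProduct.tmul_add, map_add, hu, hv]; abel
  | smul r u hu =>
    intro x x'
    simp only [TensorProduct.tmul_smul, LinearMap.map_smul_of_tower, hu, smul_sub]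
  | ι_mul y u hu =>
    intro x x'
    have hjacobi : ⁅⁅x, x'⁆, (y : L)⁆ = ⁅⁅x, (y : L)⁆, x'⁆ + ⁅x, ⁅x', (y : L)⁆⁆ := by
      rw [lie_lie, ← lie_skew x' ⁅x, (y : L)⁆]
      abel
    rw [← one_mul (1 : R[X]), ← Algebra.TensorProduct.tmul_mul_tmul, ← embed_apply]
    simp only [action_embed_mul, map_add, hjacobi, LinearMap.add_apply, hu, mul_sub]
    abel

noncomputable def rep (hπ : ∀ y : 𝔫, π y = y) (hχ : ∀ y : 𝔫, χ y = 0)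
    (hker : ∀ x y, π x = 0 → π y = 0 → π ⁅x, y⁆ = 0 ∧ χ ⁅x, y⁆ = 0) :
    L →ₗ⁅R⁆ Module.End R[X] V :=
  { action π χ with
    map_lie' := fun {x x'} ↦ (action_lie hπ hχ hker x x').trans (Ring.lie_def _ _).symm }

lemma lift_rep_apply_one_eq_zero (hπ : ∀ y : 𝔫, π y = y) (hχ : ∀ y : 𝔫, χ y = 0)
    (hker : ∀ x y, π x = 0 → π y = 0 → π ⁅x, y⁆ = 0 ∧ χ ⁅x, y⁆ = 0)
    {u : UniversalEnvelopingAlgebra R L}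
    (hu : u ∈ Submodule.span (UniversalEnvelopingAlgebra R L) (ι R '' {x | π x = 0 ∧ χ x = 0})) :
    lift R (rep hπ hχ hker) u 1 = 0 := by
  induction hu using Submodule.span_induction with
  | mem a ha =>
    obtain ⟨x, ⟨hπx, hχx⟩, rfl⟩ := ha
    rw [lift_ι_apply]
    exact (action_one π χ x).trans (actOne_eq_zero hπx hχx)
  | zero => simp
  | add u w _ _ hu hw => rw [map_add, LinearMap.add_apply, hu, hw, add_zero]
  | smul c u _ hu => rw [smul_eq_mul, map_mul, Module.End.mul_apply, hu, map_zero]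

lemma lift_rep_aeval_apply_one (hπ : ∀ y : 𝔫, π y = y) (hχ : ∀ y : 𝔫, χ y = 0)
    (hker : ∀ x y, π x = 0 → π y = 0 → π ⁅x, y⁆ = 0 ∧ χ ⁅x, y⁆ = 0)
    {d : L} (hπd : π d = 0) (hχd : χ d = 1) (p : R[X]) :
    lift R (rep hπ hχ hker) (aeval (ι R d) p) 1 = p • (1 : V) := by
  have hd : rep hπ hχ hker d 1 = (X : R[X]) • (1 : V) := by
    refine (action_one π χ d).trans ?_
    simp [actOne, hπd, hχd, Algebra.TensorProduct.one_def, TensorProduct.smul_tmul']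
  rw [← aeval_algHom_apply, lift_ι_apply]
  induction p using Polynomial.induction_on with
  | C a => simpa using (algebraMap_smul R[X] a (1 : V)).symm
  | add p q hp hq => rw [map_add, LinearMap.add_apply, hp, hq, add_smul]
  | monomial n a ih =>
    rw [pow_succ, ← mul_assoc, map_mul, Module.End.mul_apply, aeval_X, hd, LinearMap.map_smul, ih,
      smul_smul, mul_comm X]

variable (𝔫) in
noncomputable def vacuumCoeff : V →ₗ[R[X]] R[X] :=
  (Algebra.linearMap R R[X] ∘ₗ (lift R (0 : 𝔫 →ₗ⁅R⁆ R)).toLinearMap).liftBaseChange R[X]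

lemma vacuumCoeff_one : vacuumCoeff 𝔫 1 = 1 := by
  simp [vacuumCoeff, Algebra.TensorProduct.one_def]

end VermaModule

section CyclicSubmodule

variable {A S M : Type*} [Ring A] [CommRing S] [AddCommGroup M] [Module S M]
  (Φ : A →+* Module.End S M) {I : Submodule A A} {v : M} {co : M →ₗ[S] S} {a : A} {s : S}

lemma span_singleton_mk_ne_bot (hco : co v = 1) (hI : ∀ u ∈ I, Φ u v = 0) (ha : Φ a v = s • v)
    (hs : s ≠ 0) : Submodule.span A {(Submodule.Quotient.mk a : A ⧸ I)} ≠ ⊥ := by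
  rw [Ne, Submodule.span_singleton_eq_bot, Submodule.Quotient.mk_eq_zero]
  intro haI
  apply hs
  simpa [hco] using congr_arg co (ha.symm.trans (hI a haI))

lemma span_singleton_mk_ne_top (hco : co v = 1) (hI : ∀ u ∈ I, Φ u v = 0) (ha : Φ a v = s • v)
    (hs : ¬IsUnit s) : Submodule.span A {(Submodule.Quotient.mk a : A ⧸ I)} ≠ ⊤ := by
  intro htop
  obtain ⟨u, hu⟩ := Submodule.mem_span_singleton.1
    (htop ▸ Submodule.mem_top : (Submodule.Quotient.mk 1 : A ⧸ I) ∈ _)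
  rw [← Submodule.Quotient.mk_smul, smul_eq_mul, Submodule.Quotient.eq] at hu
  have hv : Φ u (s • v) = v := by
    simpa [sub_eq_zero, ha] using hI _ hu
  apply hs
  refine IsUnit.of_mul_eq_one (co (Φ u v)) ?_
  rw [← smul_eq_mul, ← LinearMap.map_smul, ← LinearMap.map_smul, hv, hco]

end CyclicSubmodule

section GradedLieAlgebra

variable {R L ι : Type*} [CommRing R] [LieRing L] [LieAlgebra R L]

lemma lie_mem_of_mem_iSup₂ {g : ι → Submodule R L} {S T : ι → Prop} {Q : Submodule R L}
    (h : ∀ m n, S m → T n → ∀ x ∈ g m, ∀ y ∈ g n, ⁅x, y⁆ ∈ Q) {x y : L}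
    (hx : x ∈ ⨆ (m) (_ : S m), g m) (hy : y ∈ ⨆ (n) (_ : T n), g n) : ⁅x, y⁆ ∈ Q := by
  have hle : Submodule.map₂ (LieAlgebra.ad R L : L →ₗ[R] L →ₗ[R] L)
      (⨆ (m) (_ : S m), g m) (⨆ (n) (_ : T n), g n) ≤ Q := by
    simp only [Submodule.map₂_iSup_left, Submodule.map₂_iSup_right]
    exact iSup₂_le fun n hn ↦ iSup₂_le fun m hm ↦ Submodule.map₂_le.2 (h m n hm hn)
  exact hle (Submodule.apply_mem_map₂ _ hx hy)

variable {g : ℤ → Submodule R L}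

lemma isCompl_iSup_neg_iSup_nonneg (hInt : DirectSum.IsInternal g) :
    IsCompl (⨆ n < 0, g n) (⨆ n ≥ 0, g n) where
  disjoint := hInt.submodule_iSupIndep.disjoint_biSup_biSup (s := {n | n < 0}) (t := {n | n ≥ 0})
    (Set.disjoint_left.2 fun n (hn : n < 0) (hn' : n ≥ 0) ↦ by omega)
  codisjoint := by
    rw [codisjoint_iff, eq_top_iff, ← hInt.submodule_iSup_eq_top]
    refine iSup_le fun n ↦ ?_
    rcases lt_or_ge n 0 with hn | hn
    · exact le_sup_of_le_left (le_iSup₂ (f := fun k (_ : k < 0) ↦ g k) n hn)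
    · exact le_sup_of_le_right (le_iSup₂ (f := fun k (_ : k ≥ 0) ↦ g k) n hn)

lemma lie_mem_iSup_pos (hBrk : ∀ m n : ℤ, ∀ x ∈ g m, ∀ y ∈ g n, ⁅x, y⁆ ∈ g (m + n))
    {d : L} (hd0 : g 0 = Submodule.span R {d}) {x y : L}
    (hx : x ∈ ⨆ n ≥ 0, g n) (hy : y ∈ ⨆ n ≥ 0, g n) : ⁅x, y⁆ ∈ ⨆ n > 0, g n := by
  refine lie_mem_of_mem_iSup₂ (fun m n hm hn x hx y hy ↦ ?_) hx hy
  rcases (show 0 < m + n ∨ (m = 0 ∧ n = 0) by omega) with hmn | ⟨rfl, rfl⟩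
  · exact le_iSup₂ (f := fun k (_ : k > 0) ↦ g k) (m + n) hmn (hBrk m n x hx y hy)
  · rw [hd0, Submodule.mem_span_singleton] at hx hy
    obtain ⟨a, rfl⟩ := hx
    obtain ⟨b, rfl⟩ := hy
    simp

variable (hInt : DirectSum.IsInternal g)
  (hBrk : ∀ m n : ℤ, ∀ x ∈ g m, ∀ y ∈ g n, ⁅x, y⁆ ∈ g (m + n))

def negativePart : LieSubalgebra R L where
  toSubmodule := ⨆ n < 0, g n
  lie_mem' hx hy := lie_mem_of_mem_iSup₂ (fun m n hm hn x hx y hy ↦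
    le_iSup₂ (f := fun k (_ : k < 0) ↦ g k) (m + n) (by omega) (hBrk m n x hx y hy)) hx hy

noncomputable def negativeProj : L →ₗ[R] negativePart hBrk :=
  Submodule.projectionOnto _ _ (isCompl_iSup_neg_iSup_nonneg hInt)

lemma negativeProj_coe (y : negativePart hBrk) : negativeProj hInt hBrk y = y :=
  Submodule.projectionOnto_apply_left _ y

lemma negativeProj_eq_zero_iff {x : L} : negativeProj hInt hBrk x = 0 ↔ x ∈ ⨆ n ≥ 0, g n :=
  Submodule.projectionOnto_apply_eq_zero_iff _

lemma negativeProj_eq_zero_of_mem_iSup_pos {x : L} (hx : x ∈ ⨆ n > 0, g n) :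
    negativeProj hInt hBrk x = 0 :=
  (negativeProj_eq_zero_iff hInt hBrk).2
    ((biSup_mono fun _ ↦ le_of_lt : ⨆ n > 0, g n ≤ ⨆ n ≥ 0, g n) hx)

end GradedLieAlgebra

lemma exists_dual_eq_one_of_mem_degree_zero {K L : Type*} [Field K] [AddCommGroup L] [Module K L]
    {g : ℤ → Submodule K L} (hInt : DirectSum.IsInternal g) {d : L} (hd : d ≠ 0) (hdg : d ∈ g 0) :
    ∃ χ : L →ₗ[K] K, χ d = 1 ∧ ⨆ n < 0, g n ≤ LinearMap.ker χ ∧ ⨆ n > 0, g n ≤ LinearMap.ker χ := by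
  have hdis : d ∉ ⨆ n ≠ 0, g n := fun h ↦
    hd ((Submodule.disjoint_def.1 (hInt.submodule_iSupIndep 0)) d hdg h)
  obtain ⟨f, hfd, hf⟩ := Submodule.exists_le_ker_of_notMem hdis
  have hker : ⨆ n ≠ 0, g n ≤ LinearMap.ker ((f d)⁻¹ • f) := fun x hx ↦ by
    simp [LinearMap.mem_ker.1 (hf hx)]
  exact ⟨(f d)⁻¹ • f, by simp [hfd], (biSup_mono fun _ ↦ ne_of_lt).trans hker,
    (biSup_mono fun _ ↦ ne_of_gt).trans hker⟩

theorem stmt_6_general (L : Type*) [LieRing L] [LieAlgebra ℂ L]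
    (g : ℤ → Submodule ℂ L) (hInt : DirectSum.IsInternal g)
    (hBrk : ∀ m n : ℤ, ∀ x ∈ g m, ∀ y ∈ g n, ⁅x, y⁆ ∈ g (m + n))
    (d : L) (hd : d ≠ 0) (hd0 : g 0 = Submodule.span ℂ {d})
    (Np : LieSubalgebra ℂ L) (hNp : Np.toSubmodule = ⨆ n > (0 : ℤ), g n)
    (p : Polynomial ℂ) (hp : 0 < p.natDegree) :
    Submodule.span (UniversalEnvelopingAlgebra ℂ L)
        {(Submodule.Quotient.mk (aeval (ι ℂ d) p) :
          UniversalEnvelopingAlgebra ℂ L ⧸ zeroWhittakerIdeal L Np)} ≠ ⊥ ∧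
    Submodule.span (UniversalEnvelopingAlgebra ℂ L)
        {(Submodule.Quotient.mk (aeval (ι ℂ d) p) :
          UniversalEnvelopingAlgebra ℂ L ⧸ zeroWhittakerIdeal L Np)} ≠ ⊤ ∧
    ¬ IsSimpleModule (UniversalEnvelopingAlgebra ℂ L)
        (UniversalEnvelopingAlgebra ℂ L ⧸ zeroWhittakerIdeal L Np) := by
  have hdg : d ∈ g 0 := hd0 ▸ Submodule.mem_span_singleton_self d
  obtain ⟨χ, hχd, hχN, hχP⟩ := exists_dual_eq_one_of_mem_degree_zero hInt hd hdg
  set π := negativeProj hInt hBrk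
  have hpos (x) (hx : x ∈ ⨆ n > 0, g n) : π x = 0 ∧ χ x = 0 :=
    ⟨negativeProj_eq_zero_of_mem_iSup_pos hInt hBrk hx, hχP hx⟩
  have hker (x y : L) (hx : π x = 0) (hy : π y = 0) : π ⁅x, y⁆ = 0 ∧ χ ⁅x, y⁆ = 0 :=
    hpos _ (lie_mem_iSup_pos hBrk hd0 ((negativeProj_eq_zero_iff hInt hBrk).1 hx)
      ((negativeProj_eq_zero_iff hInt hBrk).1 hy))
  have hπd : π d = 0 := (negativeProj_eq_zero_iff hInt hBrk).2
    (le_iSup₂ (f := fun n (_ : n ≥ 0) ↦ g n) 0 le_rfl hdg)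
  have hπ := negativeProj_coe hInt hBrk
  have hχ (y : negativePart hBrk) : χ y = 0 := hχN y.2
  set Φ := lift ℂ (VermaModule.rep hπ hχ hker)
  have hI (u) (hu : u ∈ zeroWhittakerIdeal L Np) : Φ u 1 = 0 :=
    VermaModule.lift_rep_apply_one_eq_zero _ _ _ <| Submodule.span_mono
      (by rintro _ ⟨x, rfl⟩; exact ⟨x, hpos x (hNp ▸ x.2), rfl⟩) hu
  have hpv := VermaModule.lift_rep_aeval_apply_one hπ hχ hker hπd hχd p
  have hbot := span_singleton_mk_ne_bot Φ.toRingHom VermaModule.vacuumCoeff_one hI hpv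
    (ne_zero_of_natDegree_gt hp)
  have htop := span_singleton_mk_ne_top Φ.toRingHom VermaModule.vacuumCoeff_one hI hpv
    fun hu ↦ hp.ne' (natDegree_eq_zero_of_isUnit hu)
  exact ⟨hbot, htop, fun _ ↦ (eq_bot_or_eq_top _).elim hbot htop⟩

/-- Let `𝔤 = ⊕_{n∈ℤ} 𝔤ₙ` be ℤ-graded with `𝔤₀ = ℂd` one-dimensional and `⁅d,x⁆ = n•x`
for `x ∈ 𝔤ₙ`, and let `𝔫⁺ = ⊕_{n>0} 𝔤ₙ`.  For the standard Whittaker module `M_0` of the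
zero homomorphism and any nonconstant polynomial `p`, the cyclic submodule
`U(𝔤)·[p(ι d)]` is a nonzero proper submodule of `M_0`; in particular `M_0` is not
simple. -/
theorem stmt_6 (L : Type*) [LieRing L] [LieAlgebra ℂ L]
    (g : ℤ → Submodule ℂ L) (hInt : DirectSum.IsInternal g)
    (hBrk : ∀ m n : ℤ, ∀ x ∈ g m, ∀ y ∈ g n, ⁅x, y⁆ ∈ g (m + n))
    (d : L) (hd : d ≠ 0) (hd0 : g 0 = Submodule.span ℂ {d})
    (hdx : ∀ n : ℤ, ∀ x ∈ g n, ⁅d, x⁆ = (n : ℂ) • x)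
    (Np : LieSubalgebra ℂ L) (hNp : Np.toSubmodule = ⨆ n > (0 : ℤ), g n)
    (p : Polynomial ℂ) (hp : 0 < p.natDegree) :
    Submodule.span (UniversalEnvelopingAlgebra ℂ L)
        {(Submodule.Quotient.mk (aeval (ι ℂ d) p) :
          UniversalEnvelopingAlgebra ℂ L ⧸ zeroWhittakerIdeal L Np)} ≠ ⊥ ∧
    Submodule.span (UniversalEnvelopingAlgebra ℂ L)
        {(Submodule.Quotient.mk (aeval (ι ℂ d) p) :
          UniversalEnvelopingAlgebra ℂ L ⧸ zeroWhittakerIdeal L Np)} ≠ ⊤ ∧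
    ¬ IsSimpleModule (UniversalEnvelopingAlgebra ℂ L)
        (UniversalEnvelopingAlgebra ℂ L ⧸ zeroWhittakerIdeal L Np) :=
  stmt_6_general L g hInt hBrk d hd hd0 Np hNp p hp
end
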